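/- Let d ≥ 1, let K ⊂ ℝ^d be a compact convex set containing at least two points, and let σ = ReLU, i.e., σ(t) = max{0, t}. Let (r_k)_{k≥1} and (n_k)_{k≥1} be arbitrary sequences of natural numbers and let (ε_k)_{k≥1} be a sequence of real numbers with ε_k → 0. Then there exists a continuous function f : K → ℝ such that for every k ≥ 1, inf_{g ∈ τ_{r_k, n_k}^{σ,d}} sup_{x ∈ K} |f(x) − g(x)| ≥ ε_k. -/

import Mathlib

open MeasureTheory

/-- `Hidden σ d n s` is the set of tuples of hidden-unit functions `h^{(s+1)} = (h_1, …, h_n)` of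
the `(s+1)`-st hidden layer of a feedforward network with input dimension `d`, `n` units in each
hidden layer and activation `σ`:  `h^{(1)}_i(x) = σ(w^i · x + b_i)` and
`h^{(ℓ+1)}_i(x) = σ(∑_j a_{ij} h^{(ℓ)}_j(x) + β_i)`. -/
def Hidden (σ : ℝ → ℝ) (d n : ℕ) : ℕ → Set ((Fin d → ℝ) → Fin n → ℝ)
  | 0 => { h | ∃ (w : Fin n → Fin d → ℝ) (b : Fin n → ℝ),
      h = fun x i => σ ((∑ j, w i j * x j) + b i) }
  | s + 1 => { h | ∃ g ∈ Hidden σ d n s, ∃ (a : Fin n → Fin n → ℝ) (β : Fin n → ℝ),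
      h = fun x i => σ ((∑ j, a i j * g x j) + β i) }

/-- `Tau σ r n d` is the set `τ_{r,n}^{σ,d}` of functions `ℝ^d → ℝ` computed by a feedforward
neural network with activation `σ`, at most `r` hidden layers and `n` units in each hidden
layer: `x ↦ ∑_i c_i h^{(s)}_i(x)` for some `1 ≤ s ≤ r`. -/
def Tau (σ : ℝ → ℝ) (r n d : ℕ) : Set ((Fin d → ℝ) → ℝ) :=
  { f | ∃ s : ℕ, s < r ∧ ∃ h ∈ Hidden σ d n s, ∃ c : Fin n → ℝ,
      f = fun x => ∑ i, c i * h x i }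

/-- Piecewise linear with "complexity" `B`. -/
def PL : ℕ → (ℝ → ℝ) → Prop
  | 0, φ => ∃ p q : ℝ, ∀ t, φ t = p * t + q
  | (B+1), φ => PL B φ ∨ ∃ c : ℝ, ∃ ψ₁ ψ₂ : ℝ → ℝ, PL B ψ₁ ∧ PL B ψ₂ ∧
      (∀ t, t ≤ c → φ t = ψ₁ t) ∧ (∀ t, c ≤ t → φ t = ψ₂ t)

lemma PL_congr : ∀ (B : ℕ) (φ ψ : ℝ → ℝ), (∀ t, φ t = ψ t) → PL B φ → PL B ψ := by
  intro B
  induction B with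
  | zero =>
    rintro φ ψ h ⟨p, q, hp⟩
    exact ⟨p, q, fun t => by rw [← h t]; exact hp t⟩
  | succ B ih =>
    rintro φ ψ h (hφ | ⟨c, ψ₁, ψ₂, h1, h2, hl, hr⟩)
    · exact Or.inl (ih φ ψ h hφ)
    · exact Or.inr ⟨c, ψ₁, ψ₂, h1, h2, fun t ht => (h t).symm.trans (hl t ht),
        fun t ht => (h t).symm.trans (hr t ht)⟩

lemma PL_mono : ∀ {B C : ℕ} {φ : ℝ → ℝ}, B ≤ C → PL B φ → PL C φ := by
  intro B C φ h hB
  induction C with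
  | zero =>
    have hB0 : B = 0 := by omega
    exact hB0 ▸ hB
  | succ C ih =>
    by_cases hBC : B ≤ C
    · exact Or.inl (ih hBC)
    · have : B = C + 1 := by omega
      exact this ▸ hB

lemma PL_const (c : ℝ) : PL 0 (fun _ => c) := ⟨0, c, fun t => by ring⟩

lemma PL_add_affine (p q : ℝ) : ∀ (C : ℕ) (ψ : ℝ → ℝ), PL C ψ →
    PL C (fun t => (p * t + q) + ψ t) := by
  intro C
  induction C with
  | zero =>
    rintro ψ ⟨p', q', h⟩
    exact ⟨p + p', q + q', fun t => by simp only [h t]; ring⟩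
  | succ C ih =>
    rintro ψ (hψ | ⟨c, ψ₁, ψ₂, h1, h2, hl, hr⟩)
    · exact Or.inl (ih ψ hψ)
    · exact Or.inr ⟨c, fun t => (p * t + q) + ψ₁ t, fun t => (p * t + q) + ψ₂ t,
        ih ψ₁ h1, ih ψ₂ h2, fun t ht => by simp only [hl t ht],
        fun t ht => by simp only [hr t ht]⟩

lemma PL_add : ∀ (B C : ℕ) (φ ψ : ℝ → ℝ), PL B φ → PL C ψ →
    PL (B + C) (fun t => φ t + ψ t) := by
  intro B
  induction B with
  | zero =>
    rintro C φ ψ ⟨p, q, h⟩ hψ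
    rw [Nat.zero_add]
    exact PL_congr C _ _ (fun t => by rw [← h t]) (PL_add_affine p q C ψ hψ)
  | succ B ih =>
    rintro C φ ψ (hφ | ⟨c, φ₁, φ₂, h1, h2, hl, hr⟩) hψ
    · exact PL_mono (by omega) (ih C φ ψ hφ hψ)
    · have : B + 1 + C = (B + C) + 1 := by omega
      rw [this]
      exact Or.inr ⟨c, fun t => φ₁ t + ψ t, fun t => φ₂ t + ψ t,
        ih C φ₁ ψ h1 hψ, ih C φ₂ ψ h2 hψ,
        fun t ht => by simp only [hl t ht], fun t ht => by simp only [hr t ht]⟩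

lemma PL_smul (c : ℝ) : ∀ (B : ℕ) (φ : ℝ → ℝ), PL B φ → PL B (fun t => c * φ t) := by
  intro B
  induction B with
  | zero =>
    rintro φ ⟨p, q, h⟩
    exact ⟨c * p, c * q, fun t => by simp only [h t]; ring⟩
  | succ B ih =>
    rintro φ (hφ | ⟨c', ψ₁, ψ₂, h1, h2, hl, hr⟩)
    · exact Or.inl (ih φ hφ)
    · exact Or.inr ⟨c', fun t => c * ψ₁ t, fun t => c * ψ₂ t, ih ψ₁ h1, ih ψ₂ h2,
        fun t ht => by simp only [hl t ht], fun t ht => by simp only [hr t ht]⟩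

lemma PL_sum {ι : Type*} (s : Finset ι) (B : ι → ℕ) (f : ι → ℝ → ℝ)
    (h : ∀ i ∈ s, PL (B i) (f i)) :
    PL (∑ i ∈ s, B i) (fun t => ∑ i ∈ s, f i t) := by
  induction s using Finset.cons_induction with
  | empty => simpa using PL_const 0
  | cons a s ha ih =>
    rw [Finset.sum_cons]
    refine PL_congr _ _ _ (fun t => by rw [Finset.sum_cons])
      (PL_add _ _ _ _ (h a (Finset.mem_cons_self a s)) (ih ?_))
    exact fun i hi => h i (Finset.mem_cons.2 (Or.inr hi))

lemma PL_relu : ∀ (B : ℕ) (φ : ℝ → ℝ), PL B φ → PL (B + 1) (fun t => max 0 (φ t)) := by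
  intro B
  induction B with
  | zero =>
    rintro φ ⟨p, q, h⟩
    have hres : ∀ t, max 0 (φ t) = max 0 (p * t + q) := fun t => by rw [h t]
    rcases lt_trichotomy p 0 with hp | hp | hp
    · refine Or.inr ⟨-q / p, fun t => p * t + q, fun _ => 0,
        ⟨p, q, fun _ => rfl⟩, ⟨0, 0, fun t => by ring⟩, fun t ht => ?_, fun t ht => ?_⟩
      · simp only []
        rw [hres t, max_eq_right]
        have h1 : p * (-q / p) ≤ p * t := mul_le_mul_of_nonpos_left ht hp.le
        have hpne : p ≠ 0 := by intro h0; rw [h0] at hp; exact lt_irrefl 0 hp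
        have h2 : p * (-q / p) = -q := by field_simp
        linarith
      · simp only []
        rw [hres t, max_eq_left]
        have h1 : p * t ≤ p * (-q / p) := mul_le_mul_of_nonpos_left ht hp.le
        have hpne : p ≠ 0 := by intro h0; rw [h0] at hp; exact lt_irrefl 0 hp
        have h2 : p * (-q / p) = -q := by field_simp
        linarith
    · exact Or.inl ⟨0, max 0 q, fun t => by simp only [hres t, hp]; norm_num⟩
    · refine Or.inr ⟨-q / p, fun _ => 0, fun t => p * t + q,
        ⟨0, 0, fun t => by ring⟩, ⟨p, q, fun _ => rfl⟩, fun t ht => ?_, fun t ht => ?_⟩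
      · simp only []
        rw [hres t, max_eq_left]
        have h1 : p * t ≤ p * (-q / p) := by
          exact mul_le_mul_of_nonneg_left ht hp.le
        have hpne : p ≠ 0 := by intro h0; rw [h0] at hp; exact lt_irrefl 0 hp
        have h2 : p * (-q / p) = -q := by field_simp
        linarith
      · simp only []
        rw [hres t, max_eq_right]
        have h1 : p * (-q / p) ≤ p * t := mul_le_mul_of_nonneg_left ht hp.le
        have hpne : p ≠ 0 := by intro h0; rw [h0] at hp; exact lt_irrefl 0 hp
        have h2 : p * (-q / p) = -q := by field_simp
        linarith
  | succ B ih =>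
    rintro φ (hφ | ⟨c, ψ₁, ψ₂, h1, h2, hl, hr⟩)
    · exact Or.inl (ih φ hφ)
    · exact Or.inr ⟨c, fun t => max 0 (ψ₁ t), fun t => max 0 (ψ₂ t), ih ψ₁ h1, ih ψ₂ h2,
        fun t ht => by simp only [hl t ht], fun t ht => by simp only [hr t ht]⟩
/-- Monotonicity helper for strictly increasing finite sequences. -/
lemma seq_mono (t : ℕ → ℝ) (m : ℕ) (h : ∀ i, i < m → t i < t (i + 1)) :
    ∀ k i, i + k ≤ m → t i ≤ t (i + k) := by
  intro k
  induction k with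
  | zero => intro i _; exact le_refl _
  | succ k ih =>
    intro i hik
    have h1 := ih i (by omega)
    have h2 := h (i + k) (by omega)
    calc t i ≤ t (i + k) := h1
      _ ≤ t (i + k + 1) := (h2).le

/-- A `PL B` function has at most `2 ^ (B + 1)` points of strict sign alternation. -/
lemma alt_bound : ∀ (B : ℕ) (φ : ℝ → ℝ), PL B φ → ∀ (m : ℕ) (t : ℕ → ℝ),
    (∀ i, i < m → t i < t (i + 1)) → (∀ i, i < m → φ (t i) * φ (t (i + 1)) < 0) →
    m + 1 ≤ 2 ^ (B + 1) := by
  intro B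
  induction B with
  | zero =>
    rintro φ ⟨p, q, hpq⟩ m t hmono halt
    by_contra hcon
    have hm : 2 ≤ m := by omega
    have h01 : t 0 < t 1 := hmono 0 (by omega)
    have h12 : t 1 < t 2 := hmono 1 (by omega)
    have e1 : φ (t 0) * φ (t 1) < 0 := halt 0 (by omega)
    have e2 : φ (t 1) * φ (t 2) < 0 := halt 1 (by omega)
    rw [hpq (t 0), hpq (t 1)] at e1
    rw [hpq (t 1), hpq (t 2)] at e2
    have k1 : (p * t 0 + q) * (p * t 1 + q) * (t 2 - t 1) < 0 :=
      mul_neg_of_neg_of_pos e1 (by linarith)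
    have k2 : (p * t 1 + q) * (p * t 2 + q) * (t 1 - t 0) < 0 :=
      mul_neg_of_neg_of_pos e2 (by linarith)
    have k3 : 0 ≤ (p * t 1 + q) * (p * t 1 + q) * (t 2 - t 0) :=
      mul_nonneg (mul_self_nonneg _) (by linarith)
    have kid : (p * t 1 + q) * (p * t 1 + q) * (t 2 - t 0) =
        (p * t 0 + q) * (p * t 1 + q) * (t 2 - t 1) +
        (p * t 1 + q) * (p * t 2 + q) * (t 1 - t 0) := by ring
    linarith
  | succ B ih =>
    rintro φ (hφ | ⟨c, ψ₁, ψ₂, h1, h2, hl, hr⟩) m t hmono halt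
    · have := ih φ hφ m t hmono halt
      have h2 : 2 ^ (B + 1) ≤ 2 ^ (B + 2) := Nat.pow_le_pow_right (by norm_num) (by omega)
      omega
    · have hle : ∀ i j, i ≤ j → j ≤ m → t i ≤ t j := by
        intro i j hij hjm
        have := seq_mono t m hmono (j - i) i (by omega)
        have hji : i + (j - i) = j := by omega
        rwa [hji] at this
      by_cases hcm : t m ≤ c
      · -- all points in the left piece
        have hall : ∀ i, i ≤ m → φ (t i) = ψ₁ (t i) := fun i hi =>
          hl (t i) (le_trans (hle i m hi le_rfl) hcm)
        have := ih ψ₁ h1 m t hmono (fun i hi => by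
          rw [← hall i (by omega), ← hall (i + 1) (by omega)]; exact halt i hi)
        have h2 : 2 ^ (B + 1) ≤ 2 ^ (B + 2) := Nat.pow_le_pow_right (by norm_num) (by omega)
        omega
      by_cases hc0 : c < t 0
      · -- all points in the right piece
        have hall : ∀ i, i ≤ m → φ (t i) = ψ₂ (t i) := fun i hi =>
          hr (t i) (le_trans hc0.le (hle 0 i (by omega) hi))
        have := ih ψ₂ h2 m t hmono (fun i hi => by
          rw [← hall i (by omega), ← hall (i + 1) (by omega)]; exact halt i hi)
        have h2 : 2 ^ (B + 1) ≤ 2 ^ (B + 2) := Nat.pow_le_pow_right (by norm_num) (by omega)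
        omega
      push_neg at hcm hc0
      -- split at the largest index j with t j ≤ c
      classical
      set P : ℕ → Prop := fun i => t i ≤ c with hP
      have hPd : DecidablePred P := Classical.decPred P
      set j := @Nat.findGreatest P hPd m with hj
      have hjm : j ≤ m := Nat.findGreatest_le m
      have hPj : P j := Nat.findGreatest_spec (Nat.zero_le m) hc0
      have hjlt : j < m := by
        rcases Nat.lt_or_ge j m with h | h
        · exact h
        · exfalso; have : j = m := by omega
          rw [this] at hPj; exact absurd hPj (not_le.mpr hcm)
      have hnot : ∀ i, j < i → i ≤ m → ¬ P i := fun i hji him =>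
        Nat.findGreatest_is_greatest hji him
      have htj1 : c < t (j + 1) := by
        have := hnot (j + 1) (by omega) (by omega)
        exact not_le.mp this
      -- left part: indices 0..j
      have hleft : j + 1 ≤ 2 ^ (B + 1) := by
        refine ih ψ₁ h1 j t (fun i hi => hmono i (by omega)) (fun i hi => ?_)
        have e1 : φ (t i) = ψ₁ (t i) := hl _ (le_trans (hle i j (by omega) hjm) hPj)
        have e2 : φ (t (i + 1)) = ψ₁ (t (i + 1)) :=
          hl _ (le_trans (hle (i + 1) j (by omega) hjm) hPj)
        rw [← e1, ← e2]; exact halt i (by omega)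
      -- right part: indices j+1..m
      have hright : (m - (j + 1)) + 1 ≤ 2 ^ (B + 1) := by
        refine ih ψ₂ h2 (m - (j + 1)) (fun i => t (j + 1 + i))
          (fun i hi => by
            have := hmono (j + 1 + i) (by omega)
            have he : j + 1 + i + 1 = j + 1 + (i + 1) := by omega
            rwa [he] at this)
          (fun i hi => ?_)
        have e1 : φ (t (j + 1 + i)) = ψ₂ (t (j + 1 + i)) :=
          hr _ (le_trans htj1.le (hle (j + 1) (j + 1 + i) (by omega) (by omega)))
        have e2 : φ (t (j + 1 + (i + 1))) = ψ₂ (t (j + 1 + (i + 1))) :=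
          hr _ (le_trans htj1.le (hle (j + 1) (j + 1 + (i + 1)) (by omega) (by omega)))
        have he : j + 1 + i + 1 = j + 1 + (i + 1) := by omega
        rw [← e1, ← e2, ← he]
        exact halt (j + 1 + i) (by omega)
      have hpow : 2 ^ (B + 2) = 2 ^ (B + 1) + 2 ^ (B + 1) := by ring
      omega

/-- Complexity bound for layer `s`. -/
def Lb (n : ℕ) : ℕ → ℕ
  | 0 => 1
  | s + 1 => n * Lb n s + 1

lemma Lb_mono (n : ℕ) (hn : 1 ≤ n) : ∀ {s u : ℕ}, s ≤ u → Lb n s ≤ Lb n u := by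
  have hstep : ∀ s, Lb n s ≤ Lb n (s + 1) := by
    intro s
    show Lb n s ≤ n * Lb n s + 1
    calc Lb n s = 1 * Lb n s := (one_mul _).symm
      _ ≤ n * Lb n s := Nat.mul_le_mul_right _ hn
      _ ≤ n * Lb n s + 1 := Nat.le_succ _
  intro s u h
  exact monotone_nat_of_le_succ hstep h

lemma hidden_PL (d n : ℕ) (σ : ℝ → ℝ) (hσ : σ = fun t => max 0 t) :
    ∀ (s : ℕ) (h : (Fin d → ℝ) → Fin n → ℝ), h ∈ Hidden σ d n s →
    ∀ (x u : Fin d → ℝ) (i : Fin n), PL (Lb n s) (fun t => h (fun j => x j + t * u j) i) := by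
  intro s
  induction s with
  | zero =>
    rintro h ⟨w, b, rfl⟩ x u i
    have haff : PL 0 (fun t => (∑ j, w i j * (x j + t * u j)) + b i) := by
      refine ⟨∑ j, w i j * u j, (∑ j, w i j * x j) + b i, fun t => ?_⟩
      show (∑ j, w i j * (x j + t * u j)) + b i = _
      have hterm : ∀ j : Fin d, w i j * (x j + t * u j)
          = w i j * x j + (w i j * u j) * t := fun j => by ring
      rw [Finset.sum_congr rfl (fun j _ => hterm j), Finset.sum_add_distrib,
        ← Finset.sum_mul]
      ring
    have := PL_relu 0 _ haff
    refine PL_congr _ _ _ (fun t => ?_) this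
    rw [hσ]
  | succ s ih =>
    rintro h ⟨g, hg, a, β, rfl⟩ x u i
    have hsum : PL (∑ _j : Fin n, Lb n s)
        (fun t => ∑ j, a i j * g (fun j' => x j' + t * u j') j) :=
      PL_sum Finset.univ _ _ (fun j _ => PL_smul (a i j) _ _ (ih g hg x u j))
    have hcard : (∑ _j : Fin n, Lb n s) = n * Lb n s := by
      simp [Finset.sum_const, Finset.card_univ, Nat.smul_one_eq_cast]
    rw [hcard] at hsum
    have hinner : PL (n * Lb n s + 0)
        (fun t => (∑ j, a i j * g (fun j' => x j' + t * u j') j) + β i) :=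
      PL_add _ _ _ _ hsum (PL_const (β i))
    rw [Nat.add_zero] at hinner
    have := PL_relu _ _ hinner
    refine PL_congr _ _ _ (fun t => ?_) this
    rw [hσ]

lemma tau_PL (d n rr : ℕ) (hn : 1 ≤ n) (σ : ℝ → ℝ) (hσ : σ = fun t => max 0 t)
    (g : (Fin d → ℝ) → ℝ) (hg : g ∈ Tau σ rr n d) (x u : Fin d → ℝ) :
    PL (n * Lb n rr) (fun t => g (fun j => x j + t * u j)) := by
  obtain ⟨s, hs, h, hh, c, rfl⟩ := hg
  have hsum : PL (∑ _i : Fin n, Lb n s)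
      (fun t => ∑ i, c i * h (fun j => x j + t * u j) i) :=
    PL_sum Finset.univ _ _ (fun i _ => PL_smul (c i) _ _ (hidden_PL d n σ hσ s h hh x u i))
  have hcard : (∑ _i : Fin n, Lb n s) = n * Lb n s := by
    simp [Finset.sum_const, Finset.card_univ, Nat.smul_one_eq_cast]
  rw [hcard] at hsum
  exact PL_mono (Nat.mul_le_mul_left n (Lb_mono n hn hs.le)) hsum

lemma hidden_cont (d n : ℕ) (σ : ℝ → ℝ) (hσc : Continuous σ) :
    ∀ (s : ℕ) (h : (Fin d → ℝ) → Fin n → ℝ), h ∈ Hidden σ d n s →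
    ∀ i : Fin n, Continuous (fun x => h x i) := by
  intro s
  induction s with
  | zero =>
    rintro h ⟨w, b, rfl⟩ i
    exact hσc.comp ((continuous_finset_sum _ fun j _ =>
      continuous_const.mul (continuous_apply j)).add continuous_const)
  | succ s ih =>
    rintro h ⟨g, hg, a, β, rfl⟩ i
    exact hσc.comp ((continuous_finset_sum _ fun j _ =>
      continuous_const.mul (ih g hg j)).add continuous_const)

lemma tau_cont (d n rr : ℕ) (σ : ℝ → ℝ) (hσc : Continuous σ)
    (g : (Fin d → ℝ) → ℝ) (hg : g ∈ Tau σ rr n d) : Continuous g := by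
  obtain ⟨s, hs, h, hh, c, rfl⟩ := hg
  exact continuous_finset_sum _ fun i _ =>
    continuous_const.mul (hidden_cont d n σ hσc s h hh i)

lemma sin_half (i : ℕ) : Real.sin (((i : ℝ) + 1 / 2) * Real.pi) = (-1) ^ i := by
  induction i with
  | zero =>
    have h0 : (((0:ℕ):ℝ) + 1 / 2) * Real.pi = Real.pi / 2 := by push_cast; ring
    rw [h0, Real.sin_pi_div_two]; norm_num
  | succ i ih =>
    have he : (((i : ℕ) + 1 : ℕ) + (1:ℝ) / 2) * Real.pi
        = ((i : ℝ) + 1 / 2) * Real.pi + Real.pi := by push_cast; ring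
    rw [he, Real.sin_add_pi, ih]
    ring
noncomputable def FbD (a : ℕ → ℝ) (N : ℕ → ℕ) (k : ℕ) (t : ℝ) : ℝ :=
  a k * Real.sin ((N k : ℝ) * Real.pi *
    max 0 (min (t * ((k : ℝ) * ((k : ℝ) + 1)) - (k : ℝ)) 1))

open Classical in
noncomputable def Fosc (a : ℕ → ℝ) (N : ℕ → ℕ) : ℝ → ℝ :=
  fun t => if 0 < t ∧ t ≤ 1 then FbD a N (⌊1 / t⌋₊) t else 0

lemma FbD_cont (a : ℕ → ℝ) (N : ℕ → ℕ) (k : ℕ) : Continuous (FbD a N k) := by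
  unfold FbD
  exact continuous_const.mul (Real.continuous_sin.comp (continuous_const.mul
    (continuous_const.max (((continuous_id.mul continuous_const).sub
      continuous_const).min continuous_const))))

lemma FbD_abs_le (a : ℕ → ℝ) (N : ℕ → ℕ) (k : ℕ) (hk : 0 ≤ a k) (t : ℝ) :
    |FbD a N k t| ≤ a k := by
  unfold FbD
  rw [abs_mul, abs_of_nonneg hk]
  calc a k * |Real.sin _| ≤ a k * 1 :=
        mul_le_mul_of_nonneg_left (Real.abs_sin_le_one _) hk
    _ = a k := mul_one _

lemma FbD_vanish (a : ℕ → ℝ) (N : ℕ → ℕ) (k : ℕ) (hk : 1 ≤ k) (t : ℝ)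
    (h : t ≤ 1 / ((k : ℝ) + 1) ∨ 1 / (k : ℝ) ≤ t) : FbD a N k t = 0 := by
  have hkpos : (0 : ℝ) < k := by exact_mod_cast hk
  rcases h with h | h
  · have hmul : t * ((k : ℝ) * ((k : ℝ) + 1)) ≤
        (1 / ((k : ℝ) + 1)) * ((k : ℝ) * ((k : ℝ) + 1)) :=
      mul_le_mul_of_nonneg_right h (by positivity)
    have he : (1 / ((k : ℝ) + 1)) * ((k : ℝ) * ((k : ℝ) + 1)) = k := by
      field_simp
    have hv : t * ((k : ℝ) * ((k : ℝ) + 1)) - k ≤ 0 := by linarith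
    have hmin : min (t * ((k : ℝ) * ((k : ℝ) + 1)) - (k : ℝ)) 1 ≤ 0 :=
      le_trans (min_le_left _ _) hv
    unfold FbD
    rw [max_eq_left hmin, mul_zero, Real.sin_zero, mul_zero]
  · have hmul : (1 / (k : ℝ)) * ((k : ℝ) * ((k : ℝ) + 1)) ≤
        t * ((k : ℝ) * ((k : ℝ) + 1)) :=
      mul_le_mul_of_nonneg_right h (by positivity)
    have he : (1 / (k : ℝ)) * ((k : ℝ) * ((k : ℝ) + 1)) = (k : ℝ) + 1 := by
      field_simp
    have hv : (1 : ℝ) ≤ t * ((k : ℝ) * ((k : ℝ) + 1)) - k := by linarith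
    unfold FbD
    rw [min_eq_right hv, max_eq_right (by norm_num : (0:ℝ) ≤ 1), mul_one,
      Real.sin_nat_mul_pi, mul_zero]

lemma block_floor {k : ℕ} (hk : 1 ≤ k) {t : ℝ} (h1 : 1 / ((k : ℝ) + 1) < t)
    (h2 : t < 1 / (k : ℝ)) : ⌊1 / t⌋₊ = k := by
  have hkpos : (0 : ℝ) < k := by exact_mod_cast hk
  have ht0 : 0 < t := lt_trans (by positivity) h1
  have e1 : 1 < ((k : ℝ) + 1) * t := by
    rw [div_lt_iff₀ (by positivity)] at h1; linarith
  have e2 : (k : ℝ) * t < 1 := by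
    rw [lt_div_iff₀ hkpos] at h2; linarith
  rw [Nat.floor_eq_iff (by positivity : (0:ℝ) ≤ 1 / t)]
  constructor
  · rw [le_div_iff₀ ht0]; linarith
  · rw [div_lt_iff₀ ht0]; push_cast; linarith

lemma Fosc_cont (a : ℕ → ℝ) (N : ℕ → ℕ) (ha0 : ∀ k, 0 ≤ a k)
    (hlim : Filter.Tendsto a Filter.atTop (nhds 0)) : Continuous (Fosc a N) := by
  apply TendstoUniformly.continuous
    (F := fun m t => ∑ kk ∈ Finset.Icc 1 m, FbD a N kk t) (f := Fosc a N) (p := Filter.atTop)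
  swap
  · exact (Filter.Eventually.of_forall fun m =>
      continuous_finset_sum _ fun kk _ => FbD_cont a N kk).frequently
  rw [Metric.tendstoUniformly_iff]
  intro δ hδ
  obtain ⟨m₀, hm₀⟩ := Metric.tendsto_atTop.mp hlim δ hδ
  have hma : ∀ kk, m₀ ≤ kk → a kk < δ := by
    intro kk hkk
    have := hm₀ kk hkk
    rw [Real.dist_eq, sub_zero, abs_of_nonneg (ha0 kk)] at this
    exact this
  filter_upwards [Filter.eventually_ge_atTop m₀] with m hm t
  by_cases ht : 0 < t ∧ t ≤ 1
  · have hF : Fosc a N t = FbD a N (⌊1 / t⌋₊) t := if_pos ht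
    set k' := ⌊1 / t⌋₊ with hk'
    have hk1 : 1 ≤ k' := by
      apply Nat.le_floor
      rw [Nat.cast_one, le_div_iff₀ ht.1]
      linarith [ht.2]
    have hk'pos : (0 : ℝ) < k' := by exact_mod_cast hk1
    have h2 : (k' : ℝ) ≤ 1 / t := Nat.floor_le (div_nonneg zero_le_one ht.1.le)
    have h3 : 1 / t < (k' : ℝ) + 1 := Nat.lt_floor_add_one (1 / t)
    have htub : t ≤ 1 / (k' : ℝ) := by
      rw [le_div_iff₀ hk'pos]
      have := (le_div_iff₀ ht.1).mp h2
      linarith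
    have htlb : 1 / ((k' : ℝ) + 1) < t := by
      rw [div_lt_iff₀ (by positivity)]
      have := (div_lt_iff₀ ht.1).mp h3
      linarith
    have hvanish : ∀ kk, 1 ≤ kk → kk ≠ k' → FbD a N kk t = 0 := by
      intro kk hkk hne
      rcases lt_or_gt_of_ne hne with hlt | hgt
      · refine FbD_vanish a N kk hkk t (Or.inl ?_)
        have hle : (kk : ℝ) + 1 ≤ (k' : ℝ) := by exact_mod_cast hlt
        calc t ≤ 1 / (k' : ℝ) := htub
          _ ≤ 1 / ((kk : ℝ) + 1) := by
            apply one_div_le_one_div_of_le (by positivity) hle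
      · refine FbD_vanish a N kk hkk t (Or.inr ?_)
        have hle : (k' : ℝ) + 1 ≤ (kk : ℝ) := by exact_mod_cast hgt
        calc 1 / (kk : ℝ) ≤ 1 / ((k' : ℝ) + 1) := by
              apply one_div_le_one_div_of_le (by positivity) hle
          _ ≤ t := htlb.le
    by_cases hk'le : k' ≤ m
    · have hsum : ∑ kk ∈ Finset.Icc 1 m, FbD a N kk t = FbD a N k' t := by
        apply Finset.sum_eq_single_of_mem k' (Finset.mem_Icc.mpr ⟨hk1, hk'le⟩)
        intro kk hkk hne
        exact hvanish kk (Finset.mem_Icc.mp hkk).1 hne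
      rw [hF, hsum, dist_self]
      exact hδ
    · have hsum : ∑ kk ∈ Finset.Icc 1 m, FbD a N kk t = 0 := by
        apply Finset.sum_eq_zero
        intro kk hkk
        obtain ⟨hkk1, hkkm⟩ := Finset.mem_Icc.mp hkk
        exact hvanish kk hkk1 (by omega)
      rw [hF, hsum, dist_zero_right]
      calc |FbD a N k' t| ≤ a k' := FbD_abs_le a N k' (ha0 k') t
        _ < δ := hma k' (by omega)
  · have hF : Fosc a N t = 0 := if_neg ht
    have hsum : ∑ kk ∈ Finset.Icc 1 m, FbD a N kk t = 0 := by
      apply Finset.sum_eq_zero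
      intro kk hkk
      obtain ⟨hkk1, _⟩ := Finset.mem_Icc.mp hkk
      have hkkpos : (0 : ℝ) < kk := by exact_mod_cast hkk1
      rcases not_and_or.mp ht with h | h
      · push_neg at h
        exact FbD_vanish a N kk hkk1 t (Or.inl (le_trans h (by positivity)))
      · push_neg at h
        refine FbD_vanish a N kk hkk1 t (Or.inr ?_)
        calc 1 / (kk : ℝ) ≤ 1 := by
              rw [div_le_one hkkpos]; exact_mod_cast hkk1
          _ ≤ t := h.le
    rw [hF, hsum, dist_self]
    exact hδ

lemma Fosc_peak (a : ℕ → ℝ) (N : ℕ → ℕ) (k : ℕ) (hk : 1 ≤ k) (i : ℕ) (hi : i < N k)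
    (T : ℝ) (hT : T = ((k : ℝ) + ((i : ℝ) + 1 / 2) / (N k)) / ((k : ℝ) * ((k : ℝ) + 1))) :
    1 / ((k : ℝ) + 1) < T ∧ T < 1 / (k : ℝ) ∧ Fosc a N T = a k * (-1) ^ i := by
  have hkpos : (0 : ℝ) < k := by exact_mod_cast hk
  have hNpos : 0 < N k := lt_of_le_of_lt (Nat.zero_le i) hi
  have hNR : (0 : ℝ) < (N k : ℝ) := by exact_mod_cast hNpos
  set θ : ℝ := ((i : ℝ) + 1 / 2) / (N k) with hθ
  have hθ0 : 0 < θ := by positivity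
  have hθ1 : θ < 1 := by
    rw [hθ, div_lt_one hNR]
    have : (i : ℝ) + 1 ≤ (N k : ℝ) := by exact_mod_cast hi
    linarith
  have hlb : 1 / ((k : ℝ) + 1) < T := by
    rw [hT, div_lt_div_iff₀ (by positivity) (by positivity)]
    nlinarith
  have hub : T < 1 / (k : ℝ) := by
    rw [hT, div_lt_div_iff₀ (by positivity) hkpos]
    nlinarith
  refine ⟨hlb, hub, ?_⟩
  have hT0 : 0 < T := lt_trans (by positivity) hlb
  have hT1 : T ≤ 1 := by
    have h1k : 1 / (k : ℝ) ≤ 1 := by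
      rw [div_le_one hkpos]; exact_mod_cast hk
    linarith
  have hfloor : ⌊1 / T⌋₊ = k := block_floor hk hlb hub
  have hF : Fosc a N T = FbD a N k T := by
    unfold Fosc
    rw [if_pos ⟨hT0, hT1⟩, hfloor]
  rw [hF]
  unfold FbD
  have hv : T * ((k : ℝ) * ((k : ℝ) + 1)) - (k : ℝ) = θ := by
    rw [hT, div_mul_cancel₀ _ (by positivity : ((k:ℝ) * ((k:ℝ)+1)) ≠ 0)]
    ring
  rw [hv, min_eq_left hθ1.le, max_eq_right hθ0.le]
  have harg : (N k : ℝ) * Real.pi * θ = ((i : ℝ) + 1 / 2) * Real.pi := by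
    rw [hθ]
    field_simp
  rw [harg, sin_half]

/-- Let `d ≥ 1`, let `K ⊂ ℝ^d` be compact and convex with at least two points,
and let `σ = ReLU`, i.e. `σ t = max 0 t`. Then for arbitrary sequences `(r_k)`, `(n_k)` of
naturals and any null sequence `(ε_k)` there is a continuous `f : K → ℝ` with
`inf_{g ∈ τ_{r_k,n_k}^{σ,d}} sup_{x ∈ K} |f x - g x| ≥ ε_k` for all `k ≥ 1`. -/
theorem deep_negative_uniform_relu (d : ℕ) (hd : 1 ≤ d) (K : Set (Fin d → ℝ))
    (hK : IsCompact K) (hKconv : Convex ℝ K) (hK2 : ∃ x ∈ K, ∃ y ∈ K, x ≠ y)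
    (σ : ℝ → ℝ) (hσ : σ = fun t => max 0 t)
    (r n : ℕ → ℕ) (hr : ∀ k, 1 ≤ r k) (hn : ∀ k, 1 ≤ n k)
    (ε : ℕ → ℝ) (hε : Filter.Tendsto ε Filter.atTop (nhds 0)) :
    ∃ f : (Fin d → ℝ) → ℝ, ContinuousOn f K ∧
      ∀ k : ℕ, 1 ≤ k → ∀ g ∈ Tau σ (r k) (n k) d,
        ε k ≤ sSup ((fun x => |f x - g x|) '' K) := by
  classical
  obtain ⟨x0, hx0, y0, hy0, hxy⟩ := hK2
  have hune : ∃ j, y0 j - x0 j ≠ 0 := by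
    by_contra hc
    push_neg at hc
    exact hxy (funext fun j => by have := hc j; linarith)
  obtain ⟨j0, hj0⟩ := hune
  set u : Fin d → ℝ := fun j => y0 j - x0 j with hudef
  set S : ℝ := ∑ j, u j * u j with hSdef
  have hSpos : 0 < S := by
    apply Finset.sum_pos' (fun j _ => mul_self_nonneg (u j))
    exact ⟨j0, Finset.mem_univ j0, mul_self_pos.mpr hj0⟩
  set ℓ : (Fin d → ℝ) → ℝ := fun z => (∑ j, (z j - x0 j) * u j) / S with hldef
  set P : ℝ → Fin d → ℝ := fun t j => x0 j + t * u j with hPdef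
  have hlP : ∀ t, ℓ (P t) = t := by
    intro t
    show (∑ j, ((x0 j + t * u j) - x0 j) * u j) / S = t
    have he : ∀ j : Fin d, ((x0 j + t * u j) - x0 j) * u j = t * (u j * u j) :=
      fun j => by ring
    rw [Finset.sum_congr rfl fun j _ => he j, ← Finset.mul_sum, ← hSdef,
      mul_div_assoc, div_self hSpos.ne', mul_one]
  have hPK : ∀ t, 0 ≤ t → t ≤ 1 → P t ∈ K := by
    intro t h0 h1
    have h := hKconv hx0 hy0 (by linarith : (0:ℝ) ≤ 1 - t) h0 (by ring)
    have he : P t = (1 - t) • x0 + t • y0 := by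
      funext j
      show x0 j + t * u j = ((1 - t) • x0 + t • y0) j
      have hUj : u j = y0 j - x0 j := rfl
      simp only [Pi.add_apply, Pi.smul_apply, smul_eq_mul, hUj]
      ring
    rw [he]
    exact h
  set M : ℕ → ℕ := fun k => n k * Lb (n k) (r k) with hMdef
  set N : ℕ → ℕ := fun k => 2 ^ (M k + 1) + 1 with hNdef
  set a : ℕ → ℝ := fun k => max (ε k) 0 with hadef
  have ha0 : ∀ k, 0 ≤ a k := fun k => le_max_right _ _
  have halim : Filter.Tendsto a Filter.atTop (nhds 0) := by
    have h1 : Filter.Tendsto (fun k => max (ε k) 0) Filter.atTop (nhds (max 0 0)) :=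
      hε.max tendsto_const_nhds
    simpa [hadef] using h1
  have hFcont : Continuous (Fosc a N) := Fosc_cont a N ha0 halim
  have hlcont : Continuous ℓ :=
    (continuous_finset_sum _ fun j _ =>
      ((continuous_apply j).sub continuous_const).mul continuous_const).div_const S
  refine ⟨fun x => Fosc a N (ℓ x), (hFcont.comp hlcont).continuousOn, ?_⟩
  intro k hk g hg
  have hgc : Continuous g :=
    tau_cont d (n k) (r k) σ (by rw [hσ]; exact continuous_const.max continuous_id) g hg
  have hBdd : BddAbove ((fun x => |Fosc a N (ℓ x) - g x|) '' K) :=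
    hK.bddAbove_image (((hFcont.comp hlcont).continuousOn.sub hgc.continuousOn).abs)
  suffices hpt : ∃ x ∈ K, ε k ≤ |Fosc a N (ℓ x) - g x| by
    obtain ⟨x, hxK, hxe⟩ := hpt
    exact le_trans hxe (le_csSup hBdd ⟨x, hxK, rfl⟩)
  by_cases hek : ε k ≤ 0
  · exact ⟨x0, hx0, le_trans hek (abs_nonneg _)⟩
  push_neg at hek
  by_contra hcon
  push_neg at hcon
  have hak : a k = ε k := max_eq_left hek.le
  set T : ℕ → ℝ := fun i =>
    ((k : ℝ) + ((i : ℝ) + 1 / 2) / (N k)) / ((k : ℝ) * ((k : ℝ) + 1)) with hTdef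
  have hpeak : ∀ i, i < N k →
      1 / ((k : ℝ) + 1) < T i ∧ T i < 1 / (k : ℝ) ∧ Fosc a N (T i) = a k * (-1) ^ i :=
    fun i hi => Fosc_peak a N k hk i hi (T i) rfl
  have hkpos : (0 : ℝ) < k := by exact_mod_cast hk
  have hT01 : ∀ i, i < N k → 0 ≤ T i ∧ T i ≤ 1 := by
    intro i hi
    obtain ⟨h1, h2, _⟩ := hpeak i hi
    have hp : (0:ℝ) < 1 / ((k:ℝ) + 1) := by positivity
    have hq : 1 / (k:ℝ) ≤ 1 := by
      rw [div_le_one hkpos]; exact_mod_cast hk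
    exact ⟨by linarith, by linarith⟩
  set φ : ℝ → ℝ := fun t => g (fun j => x0 j + t * u j) with hφdef
  have hφPL : PL (M k) φ := tau_PL d (n k) (r k) (hn k) σ hσ g hg x0 u
  have hNRpos : (0 : ℝ) < (N k : ℝ) := by
    have : 0 < N k := Nat.succ_pos _
    exact_mod_cast this
  have hTmono : ∀ i, i < N k - 1 → T i < T (i + 1) := by
    intro i _
    show ((k : ℝ) + ((i : ℝ) + 1 / 2) / (N k)) / ((k : ℝ) * ((k : ℝ) + 1)) <
      ((k : ℝ) + ((((i + 1) : ℕ) : ℝ) + 1 / 2) / (N k)) / ((k : ℝ) * ((k : ℝ) + 1))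
    have hden : (0:ℝ) < (k:ℝ) * ((k:ℝ) + 1) := mul_pos hkpos (by linarith)
    rw [div_lt_div_iff₀ hden hden]
    have h1 : ((i:ℝ) + 1 / 2) < ((((i + 1):ℕ):ℝ) + 1 / 2) := by push_cast; linarith
    have hAB : ((i:ℝ) + 1 / 2) / (N k) < ((((i + 1):ℕ):ℝ) + 1 / 2) / (N k) := by
      rw [div_lt_div_iff₀ hNRpos hNRpos]
      nlinarith
    nlinarith
  have hsign : ∀ i, i < N k → 0 < (-1 : ℝ) ^ i * φ (T i) := by
    intro i hi
    obtain ⟨_, _, hFT⟩ := hpeak i hi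
    obtain ⟨h0, h1⟩ := hT01 i hi
    have hx := hcon (P (T i)) (hPK (T i) h0 h1)
    rw [hlP (T i)] at hx
    have hgp : g (P (T i)) = φ (T i) := rfl
    rw [hFT, hak, hgp] at hx
    have habs := abs_lt.mp hx
    rcases Nat.even_or_odd i with he | ho
    · rw [he.neg_one_pow] at habs ⊢
      obtain ⟨hb1, hb2⟩ := habs
      rw [one_mul]
      rw [mul_one] at hb2
      linarith
    · rw [ho.neg_one_pow] at habs ⊢
      obtain ⟨hb1, hb2⟩ := habs
      have hφneg : φ (T i) < 0 := by nlinarith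
      nlinarith
  have hprod : ∀ i, i < N k - 1 → φ (T i) * φ (T (i + 1)) < 0 := by
    intro i hi
    have h1 := hsign i (by omega)
    have h2 := hsign (i + 1) (by omega)
    have hm : (-1 : ℝ) ^ (i + 1) = -(-1 : ℝ) ^ i := by rw [pow_succ]; ring
    rw [hm] at h2
    have hA2 : (-1 : ℝ) ^ i * (-1 : ℝ) ^ i = 1 := by
      rw [← mul_pow]; norm_num
    have hxy : -(φ (T i) * φ (T (i + 1))) =
        ((-1 : ℝ) ^ i * φ (T i)) * (-(-1 : ℝ) ^ i * φ (T (i + 1))) := by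
      linear_combination (φ (T i) * φ (T (i + 1))) * hA2
    have hpos := mul_pos h1 h2
    rw [← hxy] at hpos
    linarith
  have halt := alt_bound (M k) φ hφPL (N k - 1) T hTmono hprod
  have hNk : N k = 2 ^ (M k + 1) + 1 := rfl
  have hN1 : 1 ≤ N k := by omega
  omega
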